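/- arXiv:2410.03011 — 3 statements merged into one kernel-verified Lean document; each statement's English description precedes it below -/
import Mathlib

section
/- Let W be an orthogonal d×d real matrix and x a unit vector in R^d. If y is a unit eigenvector of W(I - xx^T) with eigenvalue λ satisfying |λ| = 1, then ⟨x, y⟩ = 0 and y is an eigenvector of W with eigenvalue λ. -/
open Matrix

lemma aux_iso {d : ℕ} (A : Matrix (Fin d) (Fin d) ℂ) (hA : Aᴴ * A = 1)
    (z : Fin d → ℂ) : star (A.mulVec z) ⬝ᵥ (A.mulVec z) = star z ⬝ᵥ z := by
  rw [star_mulVec, dotProduct_mulVec, vecMul_vecMul, hA, vecMul_one]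

/-- If `W` is orthogonal, `x` a unit vector, and `y` a unit (complex) eigenvector of
`W(I - xxᵀ)` with eigenvalue `λ` of modulus one, then `⟨x, y⟩ = 0` and `y` is an
eigenvector of `W` with eigenvalue `λ`. -/
theorem stmt_0 (d : ℕ) (W : Matrix (Fin d) (Fin d) ℝ) (hW : Wᵀ * W = 1)
    (x : Fin d → ℝ) (hx : ∑ i, x i ^ 2 = 1)
    (y : Fin d → ℂ) (hy : ∑ i, ‖y i‖ ^ 2 = 1)
    (lam : ℂ) (hlam : ‖lam‖ = 1)
    (heig : ((W * (1 - vecMulVec x x)).map (Complex.ofReal)).mulVec y = lam • y) :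
    (∑ i, (x i : ℂ) * y i = 0) ∧ (W.map (Complex.ofReal)).mulVec y = lam • y := by
  set x' : Fin d → ℂ := fun i => (x i : ℂ) with hx'
  set A := W.map Complex.ofReal with hAdef
  set c : ℂ := ∑ i, x' i * y i with hc
  have hmap : (W * (1 - vecMulVec x x)).map Complex.ofReal
      = A * (1 - vecMulVec x' x') := by
    ext i j
    simp [Matrix.mul_apply, Matrix.map_apply, Matrix.sub_apply, Matrix.one_apply,
      vecMulVec_apply, hx', hAdef, Finset.mul_sum, apply_ite (Complex.ofReal)]
  have hAunit : Aᴴ * A = 1 := by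
    ext i j
    have := congrFun (congrFun hW i) j
    simp only [Matrix.mul_apply, Matrix.transpose_apply] at this
    simp [Matrix.mul_apply, Matrix.conjTranspose_apply, Matrix.map_apply, hAdef,
      Matrix.one_apply, ← Complex.ofReal_mul, ← Complex.ofReal_sum, this, apply_ite (Complex.ofReal)]
  have hstarx : star x' = x' := by
    funext i; simp [hx', Complex.conj_ofReal]
  have hxx : x' ⬝ᵥ x' = 1 := by
    have h1 : ∑ i, x i * x i = 1 := by simpa [sq] using hx
    simp only [dotProduct, hx', ← Complex.ofReal_mul, ← Complex.ofReal_sum, h1,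
      Complex.ofReal_one]
  have hxy : x' ⬝ᵥ y = c := rfl
  have hyx : star y ⬝ᵥ x' = starRingEnd ℂ c := by
    simp [dotProduct, hc, map_sum, _root_.map_mul, hx', Complex.conj_ofReal, mul_comm]
  have hvv : (1 - vecMulVec x' x').mulVec y = y - c • x' := by
    rw [Matrix.sub_mulVec, Matrix.one_mulVec]
    congr 1
    funext i
    simp only [Matrix.mulVec, dotProduct, vecMulVec_apply, Pi.smul_apply, smul_eq_mul, hc,
      Finset.sum_mul]
    exact Finset.sum_congr rfl fun j _ => by ring
  have heig' : A.mulVec (y - c • x') = lam • y := by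
    rw [← hvv, Matrix.mulVec_mulVec, ← hmap]; exact heig
  have key := aux_iso A hAunit (y - c • x')
  rw [heig'] at key
  have hlam2 : starRingEnd ℂ lam * lam = 1 := by
    rw [mul_comm, Complex.mul_conj, ← Complex.sq_norm, hlam]
    norm_num
  have hexp : star y ⬝ᵥ y - c * starRingEnd ℂ c = star y ⬝ᵥ y := by
    calc star y ⬝ᵥ y - c * starRingEnd ℂ c
        = star (y - c • x') ⬝ᵥ (y - c • x') := by
          rw [star_sub, star_smul, hstarx, sub_dotProduct, dotProduct_sub, dotProduct_sub,
            smul_dotProduct, smul_dotProduct, dotProduct_smul, dotProduct_smul, hxx, hxy, hyx]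
          simp only [smul_eq_mul, star_trivial]
          ring
      _ = star (lam • y) ⬝ᵥ (lam • y) := key.symm
      _ = starRingEnd ℂ lam * lam * (star y ⬝ᵥ y) := by
          rw [star_smul, smul_dotProduct, dotProduct_smul]
          simp only [smul_eq_mul, Complex.star_def]
          ring
      _ = star y ⬝ᵥ y := by rw [hlam2, one_mul]
  have hc0 : c = 0 := by
    have h1 : c * starRingEnd ℂ c = 0 := by linear_combination -hexp
    have h2 : (Complex.normSq c : ℂ) = 0 := by rw [← Complex.mul_conj]; exact h1
    have h3 : Complex.normSq c = 0 := by exact_mod_cast h2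
    exact Complex.normSq_eq_zero.mp h3
  refine ⟨hc0, ?_⟩
  rw [hc0, zero_smul, sub_zero] at heig'
  exact heig'
end

section
/- Let H be a Hilbert space, (ν_s)_{s≥1} a sequence of unit vectors in H, and P_s = I - ν_s ν_s^* the orthogonal projection onto the orthogonal complement of ν_s. Let k : R^d × R^d → R be a positive definite kernel with feature map φ, suppose ν_s = φ(x_s)/‖φ(x_s)‖ for a sequence (x_s) with k(x_s, x_s) = k(x_1, x_1) for all s, and let W : H → R^d be a bounded linear map with W φ(x_t) = x_{t+1} for all t. Define μ_t recursively by requiring Σ_{s=1}^t μ_s k(x_s, x_t) = x_{t+1} for all t ≥ 1, and set W_t = Σ_{s=1}^t μ_s φ(x_s)^*. Then W_t - W = -W P_1 P_2 ⋯ P_t for all t ≥ 1. -/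
open scoped InnerProductSpace

/-- Estimate-update recursion: with `P_s = I - ν_s ν_s^*` the orthogonal projections,
`W_t = Σ_{s=1}^t μ_s φ(x_s)^*` where the `μ_s` solve the causal system, one has
`W_t - W = - W P_1 P_2 ⋯ P_t`. -/
theorem stmt_6
    (H : Type*) [NormedAddCommGroup H] [InnerProductSpace ℝ H] [CompleteSpace H]
    (d : ℕ)
    (x : ℕ → EuclideanSpace ℝ (Fin d))
    (φ : EuclideanSpace ℝ (Fin d) → H)
    (k : EuclideanSpace ℝ (Fin d) → EuclideanSpace ℝ (Fin d) → ℝ)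
    (hk : ∀ u v, k u v = ⟪φ u, φ v⟫_ℝ)
    (hkconst : ∀ s : ℕ, 1 ≤ s → k (x s) (x s) = k (x 1) (x 1))
    (hkpos : 0 < k (x 1) (x 1))
    (ν : ℕ → H) (hν : ∀ s : ℕ, 1 ≤ s → ν s = (‖φ (x s)‖)⁻¹ • φ (x s))
    (P : ℕ → H →L[ℝ] H)
    (hP : ∀ s, P s = ContinuousLinearMap.id ℝ H -
      (innerSL ℝ (ν s)).smulRight (ν s))
    (W : H →L[ℝ] EuclideanSpace ℝ (Fin d))
    (hW : ∀ t : ℕ, 1 ≤ t → W (φ (x t)) = x (t + 1))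
    (μ : ℕ → EuclideanSpace ℝ (Fin d))
    (hμ : ∀ t : ℕ, 1 ≤ t → ∑ s ∈ Finset.Icc 1 t, k (x s) (x t) • μ s = x (t + 1))
    (Wt : ℕ → H →L[ℝ] EuclideanSpace ℝ (Fin d))
    (hWt : ∀ t : ℕ, Wt t = ∑ s ∈ Finset.Icc 1 t, (innerSL ℝ (φ (x s))).smulRight (μ s)) :
    ∀ t : ℕ, 1 ≤ t →
      Wt t - W = -(W.comp (((List.range t).map (fun s => P (s + 1))).prod)) := by
  set c := k (x 1) (x 1) with hc
  have hWtapp : ∀ t (h : H), Wt t h = ∑ s ∈ Finset.Icc 1 t, ⟪φ (x s), h⟫_ℝ • μ s := by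
    intro t h
    rw [hWt]
    simp [ContinuousLinearMap.sum_apply]
  have hWt0 : Wt 0 = 0 := by
    rw [hWt]; simp
  have hnormsq : ∀ s : ℕ, 1 ≤ s → ⟪φ (x s), φ (x s)⟫_ℝ = c := by
    intro s hs; rw [← hk, hkconst s hs]
  have key : ∀ t : ℕ, c • μ (t + 1) = W (φ (x (t + 1))) - Wt t (φ (x (t + 1))) := by
    intro t
    have h1 := hμ (t + 1) (by omega)
    rw [Finset.sum_Icc_succ_top (by omega : 1 ≤ t + 1)] at h1
    have h2 : Wt t (φ (x (t + 1))) = ∑ s ∈ Finset.Icc 1 t, k (x s) (x (t + 1)) • μ s := by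
      rw [hWtapp]
      exact Finset.sum_congr rfl fun s _ => by rw [hk]
    rw [hW (t + 1) (by omega), ← h1, h2, hkconst (t + 1) (by omega)]
    abel
  have step : ∀ t : ℕ, Wt (t + 1) - W = (Wt t - W).comp (P (t + 1)) := by
    intro t
    refine ContinuousLinearMap.ext fun h => ?_
    have hφν : ν (t + 1) = (‖φ (x (t + 1))‖)⁻¹ • φ (x (t + 1)) := hν (t + 1) (by omega)
    set n := ‖φ (x (t + 1))‖ with hn
    have hnsq : n * n = c := by
      rw [← hnormsq (t + 1) (by omega), real_inner_self_eq_norm_mul_norm]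
    have hnne : n ≠ 0 := by
      intro h0
      rw [h0, mul_zero] at hnsq
      exact hkpos.ne' hnsq.symm
    have hWtsucc : Wt (t + 1) h = Wt t h + ⟪φ (x (t + 1)), h⟫_ℝ • μ (t + 1) := by
      rw [hWtapp, hWtapp, Finset.sum_Icc_succ_top (by omega : 1 ≤ t + 1)]
    have hPapp : P (t + 1) h
        = h - (n⁻¹ * ⟪φ (x (t + 1)), h⟫_ℝ) • (n⁻¹ • φ (x (t + 1))) := by
      rw [hP, hφν]
      simp [real_inner_smul_left]
    have h3 : Wt t (φ (x (t + 1))) - W (φ (x (t + 1))) = (-c) • μ (t + 1) := by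
      rw [neg_smul, key t, neg_sub]
    simp only [ContinuousLinearMap.sub_apply, ContinuousLinearMap.comp_apply]
    rw [hPapp, hWtsucc]
    simp only [map_sub, map_smul, smul_smul]
    have hWφ : W (φ (x (t + 1))) = c • μ (t + 1) + Wt t (φ (x (t + 1))) :=
      sub_eq_iff_eq_add.mp (key t).symm
    have hninv : n⁻¹ * n = 1 := inv_mul_cancel₀ hnne
    have hs2 : n⁻¹ * ⟪φ (x (t + 1)), h⟫_ℝ * n⁻¹ * c = ⟪φ (x (t + 1)), h⟫_ℝ := by
      rw [← hnsq]
      calc n⁻¹ * ⟪φ (x (t + 1)), h⟫_ℝ * n⁻¹ * (n * n)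
          = ⟪φ (x (t + 1)), h⟫_ℝ * ((n⁻¹ * n) * (n⁻¹ * n)) := by ring
        _ = ⟪φ (x (t + 1)), h⟫_ℝ := by rw [hninv]; ring
    rw [hWφ, smul_add, smul_smul, hs2]
    abel
  have main : ∀ t : ℕ,
      Wt t - W = -(W.comp (((List.range t).map (fun s => P (s + 1))).prod)) := by
    intro t
    induction t with
    | zero =>
      simp [hWt0]
      rfl
    | succ t ih =>
      rw [List.range_succ, List.map_append, List.prod_append, step t, ih]
      ext h
      simp [ContinuousLinearMap.mul_apply]
  exact fun t _ => main t
end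

section
/- Let Ω ∈ O(d) and x ∈ S^{d-1}, and define x_{t+1} = Ω x_t with x_1 = x. Then the sequence a_t := exp(⟨x_1, Ω^t x_1⟩ - 1) is stationary positive-definite: there exists a finite positive measure σ on the unit circle, which is a countable sum of point masses, such that a_t = ∫_{S^1} z^t dσ(z) for all t ≥ 0. -/
open Matrix MeasureTheory

open Module Submodule in
open scoped InnerProductSpace ComplexConjugate in
private lemma key_eigen : ∀ (n : ℕ) (E : Type) (_ : NormedAddCommGroup E)
    (_ : @InnerProductSpace ℂ E _ _)
    (_ : FiniteDimensional ℂ E), Module.finrank ℂ E = n →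
    ∀ (T : E →ₗ[ℂ] E), (∀ v w : E, ⟪T v, T w⟫_ℂ = ⟪v, w⟫_ℂ) →
    ∀ x : E, ∃ (p : Fin n → ℝ) (lam : Fin n → ℂ),
      (∀ j, 0 ≤ p j) ∧ (∀ j, ‖lam j‖ = 1) ∧
      ∀ t : ℕ, ⟪x, (T ^ t) x⟫_ℂ = ∑ j, (p j : ℂ) * lam j ^ t := by
  intro n
  induction n with
  | zero =>
    intro E _ _ _ hrk T hT x
    haveI : Subsingleton E := by
      rw [← Module.finrank_zero_iff (R := ℂ)]; omega
    refine ⟨Fin.elim0, Fin.elim0, (fun j => j.elim0), (fun j => j.elim0), fun t => ?_⟩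
    have hx0 : x = 0 := Subsingleton.elim _ _
    simp [hx0]
  | succ n ih =>
    intro E _ _ _ hrk T hT x
    haveI : Nontrivial E := Module.nontrivial_of_finrank_pos (R := ℂ) (by omega)
    obtain ⟨μ, hμ⟩ := Module.End.exists_eigenvalue (T : Module.End ℂ E)
    obtain ⟨v, hv⟩ := hμ.exists_hasEigenvector
    set u : E := ((‖v‖⁻¹ : ℝ) : ℂ) • v with hu_def
    have hu1 : ‖u‖ = 1 := by
      rw [hu_def, norm_smul, Complex.norm_real, norm_inv, norm_norm]
      exact inv_mul_cancel₀ (norm_ne_zero_iff.mpr hv.2)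
    have hu0 : u ≠ 0 := by intro h; rw [h] at hu1; simp at hu1
    have hTu : T u = μ • u := by
      rw [hu_def, _root_.map_smul, hv.apply_eq_smul, smul_comm]
    have huu : ⟪u, u⟫_ℂ = 1 := by
      rw [inner_self_eq_norm_sq_to_K, hu1]; norm_num
    clear_value u
    have hmu : ‖μ‖ = 1 := by
      have := hT u u
      rw [hTu, inner_smul_left, inner_smul_right, huu, mul_one] at this
      have h2 : ‖μ‖ ^ 2 = 1 := by
        have := congrArg (‖·‖) this
        simpa [norm_mul, sq, Complex.norm_conj] using this
      nlinarith [norm_nonneg μ]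
    set K : Submodule ℂ E := (ℂ ∙ u)ᗮ with hK_def
    have hmemK : ∀ w : E, w ∈ K ↔ ⟪u, w⟫_ℂ = 0 := fun w =>
      Submodule.mem_orthogonal_singleton_iff_inner_right
    have hK : ∀ w ∈ K, T w ∈ K := by
      intro w hw
      rw [hmemK] at hw ⊢
      have h1 := hT u w
      rw [hTu, inner_smul_left] at h1
      have hμ0 : (starRingEnd ℂ) μ ≠ 0 := by
        simp only [ne_eq, map_eq_zero]
        intro h; rw [h] at hmu; simp at hmu
      rw [hw] at h1
      exact (mul_eq_zero.mp h1).resolve_left hμ0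
    have hrkK : Module.finrank ℂ K = n := by
      have h1 : Module.finrank ℂ (ℂ ∙ u) = 1 := finrank_span_singleton hu0
      have h2 := Submodule.finrank_add_finrank_orthogonal (K := (ℂ ∙ u)) (𝕜 := ℂ) (E := E)
      rw [← hK_def] at h2
      omega
    have hKt : ∀ (t : ℕ), ∀ w ∈ K, (T ^ t) w ∈ K := by
      intro t
      induction t with
      | zero => simp
      | succ t iht =>
        intro w hw
        rw [pow_succ', Module.End.mul_apply]
        exact hK _ (iht w hw)
    have hTtu : ∀ t : ℕ, (T ^ t) u = μ ^ t • u := by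
      intro t
      induction t with
      | zero => simp
      | succ t iht =>
        rw [pow_succ', Module.End.mul_apply, iht, _root_.map_smul, hTu, smul_smul, ← pow_succ]
    set T' : K →ₗ[ℂ] K := T.restrict hK with hT'_def
    have hT'coe : ∀ (t : ℕ) (w : K), (((T' ^ t) w : K) : E) = (T ^ t) (w : E) := by
      intro t
      induction t with
      | zero => intro w; simp
      | succ t iht =>
        intro w
        rw [pow_succ', Module.End.mul_apply, pow_succ', Module.End.mul_apply, ← iht]
        rfl
    have hT'inner : ∀ v w : K, ⟪T' v, T' w⟫_ℂ = ⟪v, w⟫_ℂ := by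
      intro a b
      have := hT (a : E) (b : E)
      simpa [Submodule.coe_inner, hT'_def, LinearMap.restrict_coe_apply] using this
    set a : ℂ := ⟪u, x⟫_ℂ with ha_def
    set y : E := x - a • u with hy_def
    have hyK : y ∈ K := by
      rw [hmemK, hy_def, inner_sub_right, inner_smul_right, huu, mul_one, sub_self]
    have hxeq : x = a • u + y := by rw [hy_def]; abel
    clear_value a
    clear_value y
    obtain ⟨p', lam', hp', hlam', hmom'⟩ :=
      ih K inferInstance inferInstance inferInstance hrkK T' hT'inner ⟨y, hyK⟩
    refine ⟨Fin.cons (‖a‖ ^ 2) p', Fin.cons μ lam', ?_, ?_, ?_⟩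
    · intro j
      refine Fin.cases ?_ ?_ j
      · simp only [Fin.cons_zero]; positivity
      · intro i; simpa only [Fin.cons_succ] using hp' i
    · intro j
      refine Fin.cases ?_ ?_ j
      · simpa only [Fin.cons_zero] using hmu
      · intro i; simpa only [Fin.cons_succ] using hlam' i
    · intro t
      have hTty : (T ^ t) y ∈ K := hKt t y hyK
      have h1 : ⟪x, (T ^ t) x⟫_ℂ
          = conj a * (a * μ ^ t) + ⟪y, (T ^ t) y⟫_ℂ := by
        conv_lhs => rw [hxeq]
        rw [_root_.map_add, _root_.map_smul, hTtu, inner_add_left, inner_add_right, inner_add_right]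
        have e1 : ⟪a • u, (a • μ ^ t • u : E)⟫_ℂ = conj a * (a * μ ^ t) := by
          rw [inner_smul_left, inner_smul_right, inner_smul_right, huu]
          ring
        have e2 : ⟪a • u, (T ^ t) y⟫_ℂ = 0 := by
          rw [inner_smul_left, (hmemK _).mp hTty, mul_zero]
        have e3 : ⟪y, (a • μ ^ t • u : E)⟫_ℂ = 0 := by
          have : ⟪u, y⟫_ℂ = 0 := (hmemK _).mp hyK
          have h0 : ⟪y, u⟫_ℂ = 0 := by
            rw [← inner_conj_symm, this, _root_.map_zero]
          rw [inner_smul_right, inner_smul_right, h0]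
          ring
        rw [e1, e2, e3]
        ring
      have h2 : ⟪y, (T ^ t) y⟫_ℂ = ∑ j, (p' j : ℂ) * lam' j ^ t := by
        have := hmom' t
        rw [Submodule.coe_inner] at this
        rw [← this]
        congr 1
        exact (hT'coe t ⟨y, hyK⟩).symm
      rw [h1, h2, Fin.sum_univ_succ]
      simp only [Fin.cons_zero, Fin.cons_succ]
      have hca : conj a * a = ((‖a‖ ^ 2 : ℝ) : ℂ) := by
        rw [← Complex.normSq_eq_conj_mul_self, ← Complex.sq_norm]
      linear_combination (μ ^ t) * hca

open scoped InnerProductSpace ComplexConjugate in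
private lemma matrix_moment (d : ℕ) (Ω : Matrix (Fin d) (Fin d) ℝ) (hΩ : Ωᵀ * Ω = 1)
    (x : Fin d → ℝ) :
    ∃ (p : Fin d → ℝ) (lam : Fin d → ℂ), (∀ j, 0 ≤ p j) ∧ (∀ j, ‖lam j‖ = 1) ∧
      ∀ t : ℕ, ((x ⬝ᵥ ((Ω ^ t).mulVec x) : ℝ) : ℂ) = ∑ j, (p j : ℂ) * lam j ^ t := by
  classical
  set M : Matrix (Fin d) (Fin d) ℂ := Ω.map (algebraMap ℝ ℂ) with hM_def
  have hMpow : ∀ t : ℕ, M ^ t = (Ω ^ t).map (algebraMap ℝ ℂ) := by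
    intro t
    rw [hM_def, ← RingHom.mapMatrix_apply, ← _root_.map_pow, RingHom.mapMatrix_apply]
  have hM : Mᴴ * M = 1 := by
    have hMH : Mᴴ = Ωᵀ.map (algebraMap ℝ ℂ) := by
      ext i j
      simp [hM_def, conjTranspose_apply, Complex.conj_ofReal]
    rw [hMH, hM_def, ← RingHom.mapMatrix_apply, ← RingHom.mapMatrix_apply, ← _root_.map_mul,
      hΩ, _root_.map_one]
  set T : EuclideanSpace ℂ (Fin d) →ₗ[ℂ] EuclideanSpace ℂ (Fin d) := Matrix.toEuclideanLin M with hT_def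
  have hTapp : ∀ v : EuclideanSpace ℂ (Fin d), WithLp.ofLp (T v) = M.mulVec (WithLp.ofLp v) := fun v => rfl
  have hTinner : ∀ v w : EuclideanSpace ℂ (Fin d), ⟪T v, T w⟫_ℂ = ⟪v, w⟫_ℂ := by
    intro v w
    rw [PiLp.inner_apply, PiLp.inner_apply]
    simp only [RCLike.inner_apply]
    have lhs_eq : ∑ i, (T w i) * conj (T v i) = star (M.mulVec (WithLp.ofLp v)) ⬝ᵥ (M.mulVec (WithLp.ofLp w)) := by
      simp [dotProduct, hTapp, Pi.star_apply, mul_comm]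
    rw [lhs_eq, star_mulVec, dotProduct_mulVec, vecMul_vecMul, ← dotProduct_mulVec, hM,
      one_mulVec]
    simp [dotProduct, Pi.star_apply, mul_comm]
  have hTpow : ∀ (t : ℕ) (v : EuclideanSpace ℂ (Fin d)), WithLp.ofLp ((T ^ t) v) = (M ^ t).mulVec (WithLp.ofLp v) := by
    intro t
    induction t with
    | zero => intro v; simp [one_mulVec]
    | succ t iht =>
      intro v
      rw [pow_succ', Module.End.mul_apply, hTapp, iht, mulVec_mulVec, ← pow_succ']
  set xc : EuclideanSpace ℂ (Fin d) := WithLp.toLp 2 (fun i => ((x i : ℝ) : ℂ)) with hxc_def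
  obtain ⟨p, lam, hp, hlam, hmom⟩ := key_eigen d (EuclideanSpace ℂ (Fin d))
    inferInstance inferInstance inferInstance (by simp) T hTinner xc
  refine ⟨p, lam, hp, hlam, fun t => ?_⟩
  rw [← hmom t]
  rw [PiLp.inner_apply]
  simp only [RCLike.inner_apply, hTpow, hMpow]
  have hxcc : ∀ i, conj (xc i) = ((x i : ℝ) : ℂ) := by
    intro i; rw [hxc_def]; exact Complex.conj_ofReal _
  simp only [hxcc]
  simp only [mulVec, dotProduct, Matrix.map_apply, hxc_def]
  push_cast
  simp [Complex.coe_algebraMap]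
  exact Finset.sum_congr rfl fun i _ => mul_comm _ _

private lemma tsum_pi_prod : ∀ (d : ℕ) (f : Fin d → ℕ → ℂ), (∀ i, Summable fun n => ‖f i n‖) →
    Summable (fun k : (Fin d → ℕ) => ‖∏ i, f i (k i)‖) ∧
    ∑' k : (Fin d → ℕ), ∏ i, f i (k i) = ∏ i, ∑' n, f i n := by
  intro d
  induction d with
  | zero =>
    intro f hf
    constructor
    · exact .of_finite
    · rw [tsum_eq_single (fun i => i.elim0)
        (by intro b hb; exfalso; apply hb; funext i; exact i.elim0)]
      simp
  | succ d ih =>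
    intro f hf
    obtain ⟨ihS, ihT⟩ := ih (fun i => f i.succ) (fun i => hf i.succ)
    set e : (Fin (d + 1) → ℕ) ≃ ℕ × (Fin d → ℕ) := (Fin.consEquiv (fun _ => ℕ)).symm with he_def
    have hprod : ∀ k : Fin (d + 1) → ℕ,
        (∏ i, f i (k i)) = f 0 (e k).1 * ∏ i, f i.succ ((e k).2 i) := by
      intro k
      rw [Fin.prod_univ_succ]
      rfl
    have hS2 : Summable (fun q : ℕ × (Fin d → ℕ) => ‖f 0 q.1 * ∏ i, f i.succ (q.2 i)‖) := by
      have h := Summable.mul_of_nonneg (hf 0) ihS (fun n => norm_nonneg _) (fun k => norm_nonneg _)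
      exact h.congr fun q => (norm_mul _ _).symm
    constructor
    · rw [← Equiv.summable_iff e.symm]
      refine hS2.congr ?_
      intro q
      simp only [Function.comp]
      rw [hprod (e.symm q), e.apply_symm_apply]
    · have h1 : ∑' k : (Fin (d + 1) → ℕ), ∏ i, f i (k i)
          = ∑' q : ℕ × (Fin d → ℕ), f 0 q.1 * ∏ i, f i.succ (q.2 i) := by
        rw [← e.tsum_eq (fun q : ℕ × (Fin d → ℕ) => f 0 q.1 * ∏ i, f i.succ (q.2 i))]
        exact tsum_congr hprod
      rw [h1, ← Summable.tsum_mul_tsum (hf 0).of_norm ihS.of_norm hS2.of_norm, ihT, Fin.prod_univ_succ]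

/-- Borel measurable structure on the unit circle. -/
noncomputable instance : MeasurableSpace Circle := borel Circle

instance : BorelSpace Circle := ⟨rfl⟩

/-- For `Ω` orthogonal and `x` a unit vector, the stationary sequence
`a_t = exp(⟨x, Ω^t x⟩ - 1)` is the moment sequence of a finite, purely atomic
positive measure on the unit circle. -/
theorem stmt_12 (d : ℕ) (Ω : Matrix (Fin d) (Fin d) ℝ) (hΩ : Ωᵀ * Ω = 1)
    (x : Fin d → ℝ) (hx : ∑ i, x i ^ 2 = 1) :
    ∃ σ : Measure Circle, IsFiniteMeasure σ ∧
      (∃ (c : ℕ → ENNReal) (z : ℕ → Circle),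
        σ = Measure.sum (fun n => c n • Measure.dirac (z n))) ∧
      ∀ t : ℕ, (Real.exp ((x ⬝ᵥ ((Ω ^ t).mulVec x)) - 1) : ℂ)
        = ∫ z : Circle, (z : ℂ) ^ t ∂σ := by
  classical
  obtain ⟨p, lam, hp, hlam, hmom⟩ := matrix_moment d Ω hΩ x
  -- circle versions of the eigenvalues
  set L : Fin d → Circle := fun j =>
    ⟨lam j, by simpa [Submonoid.unitSphere, mem_sphere_zero_iff_norm] using hlam j⟩ with hL_def
  have hLcoe : ∀ j, ((L j : ℂ)) = lam j := fun j => rfl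
  -- the atoms and weights, indexed by multi-indices
  set ζ : (Fin d → ℕ) → Circle := fun k => ∏ j, (L j) ^ (k j) with hζ_def
  set W : (Fin d → ℕ) → ℝ := fun k => Real.exp (-1) * ∏ j, p j ^ (k j) / (Nat.factorial (k j)) with hW_def
  have hWnn : ∀ k, 0 ≤ W k := by
    intro k
    apply mul_nonneg (Real.exp_nonneg _)
    exact Finset.prod_nonneg fun j _ => div_nonneg (pow_nonneg (hp j) _) (by positivity)
  -- the general summability / product formula
  have hsum_gen : ∀ t : ℕ,
      Summable (fun k : (Fin d → ℕ) => ‖∏ j, ((p j : ℂ) * lam j ^ t) ^ (k j) / ((Nat.factorial (k j)) : ℂ)‖) ∧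
      ∑' k : (Fin d → ℕ), ∏ j, ((p j : ℂ) * lam j ^ t) ^ (k j) / ((Nat.factorial (k j)) : ℂ)
        = ∏ j, ∑' n : ℕ, ((p j : ℂ) * lam j ^ t) ^ n / ((Nat.factorial n : ℕ) : ℂ) := by
    intro t
    refine tsum_pi_prod d (fun j n => ((p j : ℂ) * lam j ^ t) ^ n / ((Nat.factorial n : ℕ) : ℂ)) (fun j => ?_)
    refine (Real.summable_pow_div_factorial ‖(p j : ℂ) * lam j ^ t‖).congr fun n => ?_
    rw [norm_div, norm_pow]
    norm_num
  -- coercion of the atoms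
  have hζcoe : ∀ (k : Fin d → ℕ), ((ζ k : ℂ)) = ∏ j, lam j ^ (k j) := by
    intro k
    rw [hζ_def]
    have h := map_prod Circle.coeHom (fun j => L j ^ k j) Finset.univ
    have h2 := map_pow Circle.coeHom
    exact h
  -- the key pointwise identity
  have hterm : ∀ (t : ℕ) (k : Fin d → ℕ),
      (W k : ℂ) * (ζ k : ℂ) ^ t
        = (Real.exp (-1) : ℝ) * ∏ j, ((p j : ℂ) * lam j ^ t) ^ (k j) / ((Nat.factorial (k j)) : ℂ) := by
    intro t k
    rw [hζcoe, hW_def]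
    push_cast
    rw [← Finset.prod_pow, mul_assoc]
    congr 1
    rw [← Finset.prod_mul_distrib]
    refine Finset.prod_congr rfl fun j _ => ?_
    rw [mul_pow, ← pow_mul, ← pow_mul, mul_comm (k j) t]
    ring
  -- summability of the weights
  have hWsum : Summable W := by
    have h0 := (hsum_gen 0).1
    have : Summable (fun k : (Fin d → ℕ) => ∏ j, p j ^ (k j) / ((Nat.factorial (k j)) : ℝ)) := by
      refine h0.congr fun k => ?_
      rw [norm_prod]
      refine Finset.prod_congr rfl fun j _ => ?_
      rw [norm_div, norm_pow]
      simp [abs_of_nonneg (hp j)]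
    exact this.mul_left _
  -- the injection into ℕ
  obtain ⟨g, hg⟩ := Countable.exists_injective_nat (Fin d → ℕ)
  set c : ℕ → ENNReal := Function.extend g (fun k => ENNReal.ofReal (W k)) (fun _ => 0)
    with hc_def
  set z : ℕ → Circle := Function.extend g ζ (fun _ => 1) with hz_def
  have hcg : ∀ k, c (g k) = ENNReal.ofReal (W k) := fun k => hg.extend_apply _ _ k
  have hzg : ∀ k, z (g k) = ζ k := fun k => hg.extend_apply _ _ k
  have hc0 : ∀ n, n ∉ Set.range g → c n = 0 := by
    intro n hn
    rw [hc_def, Function.extend_apply' _ _ _ (by simpa [Set.range] using hn)]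
  set σ : Measure Circle := Measure.sum (fun n => c n • Measure.dirac (z n)) with hσ_def
  have hσuniv : σ Set.univ = ENNReal.ofReal (∑' k, W k) := by
    rw [hσ_def, Measure.sum_apply _ MeasurableSet.univ]
    have h1 : ∀ n, (c n • Measure.dirac (z n)) Set.univ = c n := by
      intro n
      rw [Measure.smul_apply, measure_univ, smul_eq_mul, mul_one]
    rw [tsum_congr h1]
    have hsupp : Function.support c ⊆ Set.range g := by
      intro n hn
      by_contra hr
      exact hn (hc0 n hr)
    rw [← hg.tsum_eq hsupp]
    rw [tsum_congr hcg, ENNReal.ofReal_tsum_of_nonneg hWnn hWsum]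
  haveI hσfin : IsFiniteMeasure σ := ⟨by rw [hσuniv]; exact ENNReal.ofReal_lt_top⟩
  refine ⟨σ, hσfin, ⟨c, z, hσ_def⟩, fun t => ?_⟩
  set f : Circle → ℂ := fun w => (w : ℂ) ^ t with hf_def
  have hfc : Continuous f := by
    have : Continuous fun w : Circle => (w : ℂ) := continuous_induced_dom
    exact this.pow t
  have hfint : Integrable f σ :=
    hfc.integrable_of_hasCompactSupport
      (IsCompact.of_isClosed_subset isCompact_univ (isClosed_tsupport f) (Set.subset_univ _))
  have h1 : ∫ w, f w ∂σ = ∑' n, ∫ w, f w ∂(c n • Measure.dirac (z n)) := by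
    rw [hσ_def] at hfint ⊢
    exact integral_sum_measure hfint
  have h2 : ∀ n, ∫ w, f w ∂(c n • Measure.dirac (z n)) = (c n).toReal • f (z n) := by
    intro n
    rw [integral_smul_measure, integral_dirac' f (z n) hfc.stronglyMeasurable]
  have hsupp2 : Function.support (fun n => (c n).toReal • f (z n)) ⊆ Set.range g := by
    intro n hn
    by_contra hr
    apply hn
    simp only [hc0 n hr, ENNReal.toReal_zero, zero_smul]
  have h3 : ∀ k, (c (g k)).toReal • f (z (g k)) = (W k : ℂ) * (ζ k : ℂ) ^ t := by
    intro k
    rw [hcg, hzg, ENNReal.toReal_ofReal (hWnn k), hf_def]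
    rw [Complex.real_smul]
  have h4 : ∑' (k : Fin d → ℕ), (W k : ℂ) * (ζ k : ℂ) ^ t
      = ((Real.exp (-1) : ℝ) : ℂ) *
        ∑' k : (Fin d → ℕ), ∏ j, ((p j : ℂ) * lam j ^ t) ^ (k j) / ((Nat.factorial (k j)) : ℂ) := by
    rw [← tsum_mul_left]
    exact tsum_congr fun k => hterm t k
  have h5 : ∀ j : Fin d, ∑' n : ℕ, ((p j : ℂ) * lam j ^ t) ^ n / ((Nat.factorial n : ℕ) : ℂ)
      = Complex.exp ((p j : ℂ) * lam j ^ t) := by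
    intro j
    rw [Complex.exp_eq_exp_ℂ, NormedSpace.exp_eq_tsum_div]
  have h6 : (∏ j, ∑' n : ℕ, ((p j : ℂ) * lam j ^ t) ^ n / ((Nat.factorial n : ℕ) : ℂ))
      = Complex.exp (∑ j, (p j : ℂ) * lam j ^ t) := by
    rw [Finset.prod_congr rfl fun j _ => h5 j, ← Complex.exp_sum]
  rw [h1, tsum_congr h2, ← hg.tsum_eq hsupp2, tsum_congr h3, h4, (hsum_gen t).2, h6, ← hmom t]
  rw [Complex.ofReal_exp, Complex.ofReal_exp, ← Complex.exp_add]
  congr 1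
  push_cast
  ring
end
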